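/- Let P be a poset with least element 0 and Z(P)^× ≠ ∅ such that the reduced zero-divisor graph Γ_E(P) has at least 3 vertices. Then Γ_E(P) is not a star graph, i.e., Γ_E(P) is not isomorphic to K_{1,n} for any n. -/

import Mathlib

/-- `L(x,y) = {z : z ≤ x ∧ z ≤ y}`, where the least element `0` of the poset is `⊥`. -/
def LSet (P : Type*) [PartialOrder P] [OrderBot P] (x y : P) : Set P := {z | z ≤ x ∧ z ≤ y}

theorem LSet_comm (P : Type*) [PartialOrder P] [OrderBot P] (x y : P) :
    LSet P x y = LSet P y x := by
  ext z; exact ⟨fun h => ⟨h.2, h.1⟩, fun h => ⟨h.2, h.1⟩⟩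

/-- The annihilator of `x`: `ann(x) = {y : L(x,y) = {0}}`. -/
def ann (P : Type*) [PartialOrder P] [OrderBot P] (x : P) : Set P := {y | LSet P x y = {⊥}}

theorem mem_ann_comm (P : Type*) [PartialOrder P] [OrderBot P] (x y : P) :
    y ∈ ann P x ↔ x ∈ ann P y := by
  simp only [ann, Set.mem_setOf_eq, LSet_comm P x y]

/-- The set `Z(P)^× = Z(P) \ {0}` of nonzero zero-divisors of `P`. -/
def ZDivX (P : Type*) [PartialOrder P] [OrderBot P] : Set P :=
  {x | x ≠ ⊥ ∧ ∃ y : P, y ≠ ⊥ ∧ LSet P x y = {⊥}}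

/-- The zero-divisor graph `Γ(P)` on `Z(P)^×`. -/
def zdGraph (P : Type*) [PartialOrder P] [OrderBot P] : SimpleGraph (ZDivX P) where
  Adj a b := (a : P) ≠ (b : P) ∧ LSet P a b = {⊥}
  symm := by
    constructor
    rintro a b ⟨h1, h2⟩
    exact ⟨fun h => h1 h.symm, by rw [LSet_comm]; exact h2⟩
  loopless := by constructor; rintro a ⟨h1, _⟩; exact h1 rfl

/-- The equivalence `x ∼ y ↔ ann(x) = ann(y)` on `Z(P)^×`. -/
def annSetoid (P : Type*) [PartialOrder P] [OrderBot P] : Setoid (ZDivX P) where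
  r a b := ann P a = ann P b
  iseqv := ⟨fun _ => rfl, Eq.symm, Eq.trans⟩

/-- The reduced zero-divisor graph `Γ_E(P)`, on equivalence classes of `Z(P)^×`. -/
def redGraph (P : Type*) [PartialOrder P] [OrderBot P] :
    SimpleGraph (Quotient (annSetoid P)) where
  Adj := Quotient.lift₂ (fun a b => LSet P (a : P) (b : P) = {⊥}) (by
    intro a b a' b' ha hb
    have ha' : ann P (a : P) = ann P (a' : P) := ha
    have hb' : ann P (b : P) = ann P (b' : P) := hb
    apply propext
    constructor
    · intro h
      have h1 : (b : P) ∈ ann P (a : P) := h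
      rw [ha', mem_ann_comm, hb', mem_ann_comm] at h1
      exact h1
    · intro h
      have h1 : (b' : P) ∈ ann P (a' : P) := h
      rw [← ha', mem_ann_comm, ← hb', mem_ann_comm] at h1
      exact h1)
  symm := by
    constructor
    intro x y
    refine Quotient.inductionOn₂ x y ?_
    intro a b h
    have h' : LSet P (a : P) (b : P) = {⊥} := h
    show LSet P (b : P) (a : P) = {⊥}
    rw [LSet_comm]; exact h'
  loopless := by
    constructor
    intro x
    refine Quotient.inductionOn x ?_
    intro a h
    have h' : LSet P (a : P) (a : P) = {⊥} := h
    have hm : (a : P) ∈ LSet P (a : P) (a : P) := ⟨le_refl _, le_refl _⟩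
    rw [h'] at hm
    exact a.2.1 hm

/-!
Suppose `Γ_E(P)` is a star with centre `[x]` and two distinct leaves `[y]`, `[z]`. The leaves are
not adjacent, so some `w ≠ 0` lies below both `y` and `z`; then `x ∈ ann(w)`, so `[w]` is a vertex,
and `y ∈ ann(x) \ ann(w)` shows `[w] ≠ [x]`, so `[w]` is a leaf. For a leaf `[w]` below `y` we get
`ann(y) = ann(w)`: `ann` is antitone, and every nonzero `t ∈ ann(w)` is a neighbour of `[w]`, hence
`ann(t) = ann(x) ∋ y`. Thus `[y] = [w] = [z]`.
-/

namespace SimpleGraph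

lemma completeBipartiteGraph_fin_one_eq_starGraph (W : Type*) :
    completeBipartiteGraph (Fin 1) W = starGraph (Sum.inl 0) := by
  ext (i | w) (j | w') <;> simp [completeBipartiteGraph, Fin.fin_one_eq_zero]

lemma Iso.eq_starGraph {V V' : Type*} {G : SimpleGraph V} {r : V'} (e : G ≃g starGraph r) :
    G = starGraph (e.symm r) := by
  ext u v
  rw [← e.map_adj_iff, starGraph_adj, starGraph_adj, e.injective.ne_iff, ← e.eq_symm_apply,
    ← e.eq_symm_apply]

end SimpleGraph

section ReducedZeroDivisorGraph

variable {P : Type*} [PartialOrder P] [OrderBot P]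

lemma mem_ann_iff {x y : P} : y ∈ ann P x ↔ ∀ z, z ≤ x → z ≤ y → z = ⊥ := by
  rw [ann, Set.mem_ofPred_eq, Set.eq_singleton_iff_unique_mem]
  exact ⟨fun h z hx hy => h.2 z ⟨hx, hy⟩, fun h => ⟨⟨bot_le, bot_le⟩, fun z hz => h z hz.1 hz.2⟩⟩

lemma ann_antitone : Antitone (ann P) := fun _ _ hwy _ ht =>
  mem_ann_iff.mpr fun z hzw hzt => mem_ann_iff.mp ht z (hzw.trans hwy) hzt

lemma bot_mem_ann (x : P) : ⊥ ∈ ann P x :=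
  mem_ann_iff.mpr fun _ _ hz => le_bot_iff.mp hz

lemma notMem_ann_of_le {w y : P} (hw : w ≠ ⊥) (hwy : w ≤ y) : y ∉ ann P w :=
  fun h => hw (mem_ann_iff.mp h w le_rfl hwy)

lemma annSetoid_mk_eq_mk_iff {a b : ZDivX P} :
    (⟦a⟧ : Quotient (annSetoid P)) = ⟦b⟧ ↔ ann P a = ann P b :=
  Quotient.eq

lemma redGraph_adj_mk_iff {a b : ZDivX P} :
    (redGraph P).Adj ⟦a⟧ ⟦b⟧ ↔ (b : P) ∈ ann P a :=
  Iff.rfl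

lemma ann_eq_of_le_of_forall_adj {w x : ZDivX P} {y : P}
    (hw : ∀ r, (redGraph P).Adj ⟦w⟧ r → r = ⟦x⟧) (hwy : (w : P) ≤ y) (hy : y ∈ ann P x) :
    ann P y = ann P w := by
  refine (ann_antitone hwy).antisymm fun t ht => ?_
  by_cases ht0 : t = ⊥
  · exact ht0 ▸ bot_mem_ann y
  have htx : ann P t = ann P x :=
    annSetoid_mk_eq_mk_iff.mp <| hw ⟦⟨t, ht0, w, w.2.1, (mem_ann_comm P _ _).mp ht⟩⟧ ht
  exact (mem_ann_comm P _ _).mp (htx ▸ hy)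

lemma eq_of_redGraph_eq_starGraph {c q₁ q₂ : Quotient (annSetoid P)}
    (hstar : redGraph P = SimpleGraph.starGraph c) (h₁ : q₁ ≠ c) (h₂ : q₂ ≠ c) : q₁ = q₂ := by
  have hleaf : ∀ q, q ≠ c → ∀ r, (redGraph P).Adj q r → r = c := by
    intro q hq r hqr
    rw [hstar, SimpleGraph.starGraph_adj] at hqr
    exact hqr.2.resolve_left hq
  induction c using Quotient.inductionOn with | h x => ?_
  induction q₁ using Quotient.inductionOn with | h y => ?_
  induction q₂ using Quotient.inductionOn with | h z => ?_
  have hcentre : ∀ v : ZDivX P, ⟦v⟧ ≠ ⟦x⟧ → (v : P) ∈ ann P x := fun v hv =>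
    redGraph_adj_mk_iff.mp (hstar ▸ SimpleGraph.starGraph_center_adj hv.symm)
  have hxy := hcentre y h₁
  obtain ⟨w, hwy, hwz, hw0⟩ : ∃ w, w ≤ (y : P) ∧ w ≤ (z : P) ∧ w ≠ ⊥ := by
    by_contra! h
    exact h₂ (hleaf _ h₁ _ (redGraph_adj_mk_iff.mpr (mem_ann_iff.mpr h)))
  have hxw : (x : P) ∈ ann P w := ann_antitone hwy ((mem_ann_comm P _ _).mp hxy)
  let w' : ZDivX P := ⟨w, hw0, x, x.2.1, hxw⟩
  have hwx : ⟦w'⟧ ≠ ⟦x⟧ := fun h =>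
    notMem_ann_of_le hw0 hwy (annSetoid_mk_eq_mk_iff.mp h ▸ hxy)
  rw [annSetoid_mk_eq_mk_iff, ann_eq_of_le_of_forall_adj (hleaf _ hwx) hwy hxy,
    ann_eq_of_le_of_forall_adj (hleaf _ hwx) hwz (hcentre z h₂)]

end ReducedZeroDivisorGraph

theorem stmt7_general (P : Type*) [PartialOrder P] [OrderBot P]
    (h3 : 3 ≤ ENat.card (Quotient (annSetoid P))) :
    ∀ (W : Type*), ¬ Nonempty (redGraph P ≃g completeBipartiteGraph (Fin 1) W) := by
  rintro W ⟨e⟩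
  rw [SimpleGraph.completeBipartiteGraph_fin_one_eq_starGraph] at e
  set c := e.symm (Sum.inl 0)
  obtain ⟨q₁, hq₁, -⟩ := ENat.exists_ne_ne_of_three_le h3 c c
  obtain ⟨q₂, hq₂, hq₂₁⟩ := ENat.exists_ne_ne_of_three_le h3 c q₁
  exact hq₂₁ (eq_of_redGraph_eq_starGraph e.eq_starGraph hq₂ hq₁)

/-- If `Γ_E(P)` has at least 3 vertices, then `Γ_E(P)` is not a star graph `K_{1,n}`. -/
theorem stmt7 (P : Type*) [PartialOrder P] [OrderBot P] (hZ : (ZDivX P).Nonempty)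
    (h3 : 3 ≤ ENat.card (Quotient (annSetoid P))) :
    ∀ (W : Type*), ¬ Nonempty (redGraph P ≃g completeBipartiteGraph (Fin 1) W) :=
  stmt7_general P h3
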